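/- arXiv:2604.16594 — 2 statements merged into one kernel-verified Lean document; each statement's English description precedes it below -/
import Mathlib

section
/- Let n be a natural number, let α, β be n×n complex matrices, and let M = Matrix.fromBlocks 0 α β 0 be the 2n×2n block matrix indexed by Fin n ⊕ Fin n with zero diagonal blocks, top-right block α and bottom-left block β. Then for every λ ∈ ℂ with λ ≠ 0, λ ∈ spectrum ℂ M if and only if λ² ∈ spectrum ℂ (α * β). In particular the nonzero part of the spectrum of the coupled block system is determined by the interaction product α·β and cannot be recovered from the (zero) diagonal blocks alone. -/
/-- **Nonzero spectrum of the coupled block system is governed by the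
interaction product.**  For `M = fromBlocks 0 α β 0` and `λ ≠ 0`,
`λ ∈ spectrum ℂ M ↔ λ² ∈ spectrum ℂ (α * β)`. -/
theorem spectrum_fromBlocks_offDiag_iff_sq_mem_spectrum_mul
    (n : ℕ) (α β : Matrix (Fin n) (Fin n) ℂ)
    (M : Matrix (Fin n ⊕ Fin n) (Fin n ⊕ Fin n) ℂ)
    (hM : M = Matrix.fromBlocks 0 α β 0) :
    ∀ lam : ℂ, lam ≠ 0 → (lam ∈ spectrum ℂ M ↔ lam ^ 2 ∈ spectrum ℂ (α * β)) := by
  subst hM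
  intro lam hlam
  have hinst : Invertible (lam • (1 : Matrix (Fin n) (Fin n) ℂ)) :=
    ⟨lam⁻¹ • 1, by simp [smul_smul, inv_mul_cancel₀ hlam, mul_inv_cancel₀ hlam], by
      simp [smul_smul, inv_mul_cancel₀ hlam, mul_inv_cancel₀ hlam]⟩
  haveI := hinst
  have hinv : (⅟ (lam • (1 : Matrix (Fin n) (Fin n) ℂ))) = lam⁻¹ • 1 :=
    invOf_eq_right_inv (by simp [smul_smul, mul_inv_cancel₀ hlam, inv_mul_cancel₀ hlam])
  have key : (algebraMap ℂ (Matrix (Fin n ⊕ Fin n) (Fin n ⊕ Fin n) ℂ) lam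
      - Matrix.fromBlocks 0 α β 0)
      = Matrix.fromBlocks (lam • 1) (-α) (-β) (lam • 1) := by
    rw [Algebra.algebraMap_eq_smul_one, ← Matrix.fromBlocks_one, Matrix.fromBlocks_smul,
      sub_eq_add_neg, Matrix.fromBlocks_neg, Matrix.fromBlocks_add]
    simp
  rw [spectrum.mem_iff, spectrum.mem_iff, key, Matrix.isUnit_iff_isUnit_det,
    Matrix.isUnit_iff_isUnit_det, Matrix.det_fromBlocks₂₂, hinv]
  have h1 : (-α) * (lam⁻¹ • (1 : Matrix (Fin n) (Fin n) ℂ)) * (-β) = lam⁻¹ • (α * β) := by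
    simp [Matrix.mul_smul, Matrix.smul_mul]
  have h2 : lam • (1 : Matrix (Fin n) (Fin n) ℂ) - lam⁻¹ • (α * β)
      = lam⁻¹ • (lam ^ 2 • 1 - α * β) := by
    have e : lam⁻¹ * lam ^ 2 = lam := by field_simp
    rw [smul_sub, smul_smul, e]
  have h3 : (algebraMap ℂ (Matrix (Fin n) (Fin n) ℂ) (lam ^ 2) - α * β)
      = lam ^ 2 • 1 - α * β := by rw [Algebra.algebraMap_eq_smul_one]
  rw [h1, h2, h3, Matrix.det_smul, Matrix.det_smul]
  have hl : lam ^ Fintype.card (Fin n) ≠ 0 := pow_ne_zero _ hlam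
  have hl' : lam⁻¹ ^ Fintype.card (Fin n) ≠ 0 := pow_ne_zero _ (inv_ne_zero hlam)
  rw [Matrix.det_one, mul_one, not_iff_not, isUnit_iff_ne_zero, isUnit_iff_ne_zero]
  constructor
  · intro ha hd
    exact ha (by rw [hd, mul_zero, mul_zero])
  · intro hd ha
    rcases mul_eq_zero.mp ha with h' | h'
    · exact hl h'
    · exact (mul_eq_zero.mp h').elim (fun h => hl' h) hd
end

section
/- Let C and D be monoidal categories with coequalizers, in which tensoring on each side with any object preserves coequalizers, and let F : C ⥤ D be a strong monoidal functor that preserves coequalizers. Let L, M, N be monoid objects in C, let X be an (L, M)-bimodule and Y an (M, N)-bimodule in C. Write F_*L, F_*M, F_*N for the monoid objects in D obtained by applying F and the monoidal structure isomorphisms, and write F_*X, F_*Y for F(X), F(Y) equipped with the induced bimodule structures (each action is the monoidal structure isomorphism followed by F applied to the original action). Then the canonical comparison morphism is an isomorphism F(X ⊗_M Y) ≅ F_*X ⊗_{F_*M} F_*Y, where ⊗_M denotes the balanced tensor product of bimodules (the coequalizer of the two action maps X ⊗ M ⊗ Y ⇉ X ⊗ Y). -/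
open CategoryTheory CategoryTheory.Limits CategoryTheory.MonoidalCategory
open CategoryTheory.Functor

/-- **Base change for balanced tensor products of bimodules.**
Let `F : C ⥤ D` be a strong monoidal functor preserving coequalizers, let
`L, M, N` be monoid objects in `C`, `X` an `(L, M)`-bimodule and `Y` an
`(M, N)`-bimodule.  If `X'` (resp. `Y'`) is `F(X)` (resp. `F(Y)`) equipped with
the induced bimodule structure over the pushed-forward monoids `F.mapMon.obj L`
etc. (each action being the monoidal structure map `μ` followed by `F` applied
to the original action), then `F (X ⊗_M Y) ≅ F_*X ⊗_{F_*M} F_*Y`. -/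
theorem mapBimod_tensorBimod_iso
    {C D : Type*} [Category C] [Category D]
    [MonoidalCategory C] [MonoidalCategory D]
    [HasCoequalizers C] [HasCoequalizers D]
    [∀ X : C, PreservesColimitsOfSize.{0, 0} (tensorLeft X)]
    [∀ X : C, PreservesColimitsOfSize.{0, 0} (tensorRight X)]
    [∀ X : D, PreservesColimitsOfSize.{0, 0} (tensorLeft X)]
    [∀ X : D, PreservesColimitsOfSize.{0, 0} (tensorRight X)]
    (F : C ⥤ D) [F.Monoidal]
    [PreservesColimitsOfShape WalkingParallelPair F]
    {L M N : Mon C} (X : Bimod L M) (Y : Bimod M N)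
    (X' : Bimod (F.mapMon.obj L) (F.mapMon.obj M))
    (Y' : Bimod (F.mapMon.obj M) (F.mapMon.obj N))
    (hX : X'.X = F.obj X.X) (hY : Y'.X = F.obj Y.X)
    (hXl : X'.actLeft =
      (F.obj L.X ◁ eqToHom hX) ≫ LaxMonoidal.μ F L.X X.X ≫ F.map X.actLeft ≫ eqToHom hX.symm)
    (hXr : X'.actRight =
      (eqToHom hX ▷ F.obj M.X) ≫ LaxMonoidal.μ F X.X M.X ≫ F.map X.actRight ≫ eqToHom hX.symm)
    (hYl : Y'.actLeft =
      (F.obj M.X ◁ eqToHom hY) ≫ LaxMonoidal.μ F M.X Y.X ≫ F.map Y.actLeft ≫ eqToHom hY.symm)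
    (hYr : Y'.actRight =
      (eqToHom hY ▷ F.obj N.X) ≫ LaxMonoidal.μ F Y.X N.X ≫ F.map Y.actRight ≫ eqToHom hY.symm) :
    Nonempty (F.obj (X.tensorBimod Y).X ≅ (X'.tensorBimod Y').X) := by
  obtain ⟨X'X, X'l, X'r, _, _, _, _, _⟩ := X'
  obtain ⟨Y'X, Y'l, Y'r, _, _, _, _, _⟩ := Y'
  dsimp only at hX hY
  subst hX hY
  simp only [eqToHom_refl, MonoidalCategory.whiskerLeft_id, MonoidalCategory.id_whiskerRight,
    Category.comp_id, Category.id_comp] at hXl hXr hYl hYr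
  subst hXl hXr hYl hYr
  constructor
  dsimp only [Bimod.tensorBimod, Bimod.TensorBimod.X]
  refine (PreservesCoequalizer.iso F _ _).symm ≪≫
    (HasColimit.isoOfNatIso (parallelPair.ext
      (whiskerRightIso (Functor.Monoidal.μIso F X.X M.X) (F.obj Y.X) ≪≫
        Functor.Monoidal.μIso F (X.X ⊗ M.X) Y.X)
      (Functor.Monoidal.μIso F X.X Y.X) ?_ ?_)).symm
  · dsimp [Functor.mapMon]
    simp [MonoidalCategory.comp_whiskerRight, LaxMonoidal.μ_natural_left]
  · dsimp [Functor.mapMon]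
    simp [MonoidalCategory.whiskerLeft_comp, LaxMonoidal.associativity_assoc, LaxMonoidal.μ_natural_right]
end
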